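/- For nonnegative integer n, define P_k(x,y) = prod_{j=0}^{k-1}(x - y q^j). Then sum_{k=0}^n [n choose k]_q (ax;q)_k (b;q)_k P_{n-k}(x,y) (-ab)^{n-k} q^{binom(n,2)-binom(k,2)} = (ay;q)_n * sum_{k=0}^n [n choose k]_q * ((ax;q)_{n-k} / (ay;q)_{n-k}) * (-b)^k q^{binom(k,2)}. -/

import Mathlib

open Finset

/-- The q-Pochhammer symbol `(a; q)_n = ∏_{j=0}^{n-1} (1 - a q^j)`. -/
noncomputable def qPoch (a q : ℂ) (n : ℕ) : ℂ := ∏ j ∈ Finset.range n, (1 - a * q ^ j)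

/-- The Gaussian binomial coefficient `[n choose k]_q`. -/
noncomputable def qBinom (q : ℂ) (n k : ℕ) : ℂ :=
  qPoch q q n / (qPoch q q k * qPoch q q (n - k))

/-- `P_k(x,y) = (x - y)(x - yq) ⋯ (x - y q^{k-1})`. -/
noncomputable def P (q x y : ℂ) (k : ℕ) : ℂ := ∏ j ∈ Finset.range k, (x - y * q ^ j)

/-!
Work with the Gaussian binomial as a polynomial in `q`, given by the `q`-Pascal rule; it agrees
with `qBinom` whenever `(q;q)_n ≠ 0`, and when `(q;q)_n = 0` both sides vanish because every
`qBinom q n k` does. Reversing the right-hand sum and using `(ay;q)_n / (ay;q)_k = (ayq^k;q)_{n-k}`,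
expand `(v;q)_m = ∑ᵢ [m,i]_q (u;q)_i P_{m-i}(u,v)` at `u = axq^k`, `v = ayq^k`. After
`P_m(cx,cy) = c^m P_m(x,y)` and `[n,k]_q [n-k,i]_q = [n,k+i]_q [k+i,k]_q`, exchanging the order of
summation leaves, for each `l = k + i`, an inner sum over `k` which the `q`-binomial theorem
evaluates to `(b;q)_l q^{C(n,2) - C(l,2)}`.
-/

/-- The Gaussian binomial coefficient as a polynomial in `q`, via the `q`-Pascal rule; unlike
`qBinom` it has no junk values when some `(q;q)_m` vanishes. -/
noncomputable def gaussBinom (q : ℂ) : ℕ → ℕ → ℂ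
  | _, 0 => 1
  | 0, _ + 1 => 0
  | n + 1, k + 1 => gaussBinom q n k + q ^ (k + 1) * gaussBinom q n (k + 1)

namespace gaussBinom

variable (q : ℂ)

@[simp]
lemma zero_right (n : ℕ) : gaussBinom q n 0 = 1 := by cases n <;> rfl

lemma succ_succ (n k : ℕ) :
    gaussBinom q (n + 1) (k + 1) = gaussBinom q n k + q ^ (k + 1) * gaussBinom q n (k + 1) :=
  rfl

lemma eq_zero_of_lt : ∀ {n k : ℕ}, n < k → gaussBinom q n k = 0
  | 0, _ + 1, _ => rfl
  | _ + 1, _ + 1, h => by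
    rw [succ_succ, eq_zero_of_lt (by omega), eq_zero_of_lt (by omega), mul_zero, add_zero]

@[simp]
lemma self (n : ℕ) : gaussBinom q n n = 1 := by
  induction n with
  | zero => rfl
  | succ n ih => rw [succ_succ, ih, eq_zero_of_lt q n.lt_succ_self, mul_zero, add_zero]

end gaussBinom

@[simp]
lemma qPoch_zero (a q : ℂ) : qPoch a q 0 = 1 := prod_range_zero _

lemma qPoch_succ (a q : ℂ) (n : ℕ) : qPoch a q (n + 1) = qPoch a q n * (1 - a * q ^ n) :=
  prod_range_succ _ _

lemma qPoch_add (a q : ℂ) (m n : ℕ) :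
    qPoch a q (m + n) = qPoch a q m * qPoch (a * q ^ m) q n := by
  simp only [qPoch, prod_range_add, pow_add, mul_assoc]

lemma qPoch_succ' (a q : ℂ) (n : ℕ) : qPoch a q (n + 1) = (1 - a) * qPoch (a * q) q n := by
  rw [add_comm, qPoch_add, qPoch_succ, qPoch_zero, pow_one, one_mul, pow_zero, mul_one]

lemma qPoch_ne_zero {a q : ℂ} {n : ℕ} (h : ∀ j < n, a * q ^ j ≠ 1) : qPoch a q n ≠ 0 :=
  prod_ne_zero_iff.2 fun j hj hj0 => h j (mem_range.mp hj) (sub_eq_zero.mp hj0).symm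

lemma qPoch_ne_zero_of_le {a q : ℂ} {m n : ℕ} (hmn : m ≤ n) (hn : qPoch a q n ≠ 0) :
    qPoch a q m ≠ 0 := by
  obtain ⟨k, rfl⟩ := Nat.exists_eq_add_of_le hmn
  exact left_ne_zero_of_mul (qPoch_add a q m k ▸ hn)

lemma P_succ (q x y : ℂ) (k : ℕ) : P q x y (k + 1) = P q x y k * (x - y * q ^ k) :=
  prod_range_succ _ _

lemma P_mul_mul (q x y c : ℂ) (m : ℕ) : P q (c * x) (c * y) m = c ^ m * P q x y m := by
  simp only [P, mul_assoc, ← mul_sub, prod_mul_distrib, prod_const, card_range]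

lemma gaussBinom_add_mul_qPoch (q : ℂ) (k m : ℕ) :
    gaussBinom q (k + m) k * (qPoch q q k * qPoch q q m) = qPoch q q (k + m) := by
  induction k generalizing m with
  | zero => simp
  | succ k ihk =>
    induction m with
    | zero => simp
    | succ m ihm =>
      have hk := ihk (m + 1)
      rw [show k + (m + 1) = k + 1 + m by omega, qPoch_succ q q m] at hk
      rw [qPoch_succ q q k] at ihm
      rw [show k + 1 + (m + 1) = k + 1 + m + 1 by omega, gaussBinom.succ_succ,
        qPoch_succ q q (k + 1 + m), qPoch_succ q q k, qPoch_succ q q m]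
      linear_combination (1 - q * q ^ k) * hk + q ^ (k + 1) * (1 - q * q ^ m) * ihm

lemma qBinom_eq_gaussBinom {q : ℂ} {n k : ℕ} (hn : qPoch q q n ≠ 0) (hk : k ≤ n) :
    qBinom q n k = gaussBinom q n k := by
  obtain ⟨m, rfl⟩ := Nat.exists_eq_add_of_le hk
  have h := gaussBinom_add_mul_qPoch q k m
  rw [qBinom, ← h, Nat.add_sub_cancel_left,
    mul_div_cancel_right₀ _ (right_ne_zero_of_mul (h ▸ hn))]

lemma qBinom_sub_right (q : ℂ) {n k : ℕ} (hk : k ≤ n) : qBinom q n (n - k) = qBinom q n k := by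
  rw [qBinom, qBinom, Nat.sub_sub_self hk, mul_comm]

lemma qBinom_eq_zero {q : ℂ} {n : ℕ} (hn : qPoch q q n = 0) (k : ℕ) : qBinom q n k = 0 := by
  rw [qBinom, hn, zero_div]

section

variable {q : ℂ} {n : ℕ} (hn : qPoch q q n ≠ 0)
include hn

lemma gaussBinom_sub_right {k : ℕ} (hk : k ≤ n) : gaussBinom q n (n - k) = gaussBinom q n k := by
  rw [← qBinom_eq_gaussBinom hn hk, ← qBinom_eq_gaussBinom hn (Nat.sub_le n k),
    qBinom_sub_right q hk]

lemma gaussBinom_mul_gaussBinom {k i : ℕ} (hki : k + i ≤ n) :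
    gaussBinom q n k * gaussBinom q (n - k) i
      = gaussBinom q n (k + i) * gaussBinom q (k + i) k := by
  have hne : ∀ m ≤ n, qPoch q q m ≠ 0 := fun m hm => qPoch_ne_zero_of_le hm hn
  rw [← qBinom_eq_gaussBinom hn (by omega), ← qBinom_eq_gaussBinom hn hki,
    ← qBinom_eq_gaussBinom (hne _ (Nat.sub_le n k)) (by omega),
    ← qBinom_eq_gaussBinom (hne _ hki) (by omega), qBinom, qBinom, qBinom, qBinom,
    Nat.sub_sub, Nat.add_sub_cancel_left]
  field_simp [hne k (by omega), hne i (by omega), hne (n - k) (by omega),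
    hne (k + i) hki, hne (n - (k + i)) (by omega)]

end

lemma sum_gaussBinom_succ_mul (q : ℂ) (l : ℕ) (f : ℕ → ℂ) :
    ∑ k ∈ range (l + 2), gaussBinom q (l + 1) k * f k
      = ∑ k ∈ range (l + 1), gaussBinom q l k * (f (k + 1) + q ^ k * f k) := by
  calc ∑ k ∈ range (l + 2), gaussBinom q (l + 1) k * f k
      = ∑ k ∈ range (l + 1), gaussBinom q l k * f (k + 1)
          + ∑ k ∈ range (l + 2), q ^ k * gaussBinom q l k * f k := by
        rw [sum_range_succ', sum_range_succ' (fun k => q ^ k * gaussBinom q l k * f k)]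
        simp only [gaussBinom.succ_succ, gaussBinom.zero_right, add_mul, sum_add_distrib]
        ring
    _ = ∑ k ∈ range (l + 1), gaussBinom q l k * (f (k + 1) + q ^ k * f k) := by
        rw [sum_range_succ _ (l + 1), gaussBinom.eq_zero_of_lt q l.lt_succ_self, mul_zero,
          zero_mul, add_zero, ← sum_add_distrib]
        exact sum_congr rfl fun k _ => by ring

theorem qPoch_eq_sum_gaussBinom (q b : ℂ) (l : ℕ) :
    qPoch b q l = ∑ k ∈ range (l + 1), gaussBinom q l k * (q ^ k.choose 2 * (-b) ^ k) := by
  induction l generalizing b with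
  | zero => simp
  | succ l ih =>
    rw [qPoch_succ', ih, sum_gaussBinom_succ_mul, mul_sum]
    refine sum_congr rfl fun k _ => ?_
    rw [Nat.choose_succ_succ', Nat.choose_one_right, pow_add]
    ring

theorem qPoch_eq_sum_gaussBinom_mul_qPoch_mul_P (q u v : ℂ) (m : ℕ) :
    qPoch v q m = ∑ i ∈ range (m + 1), gaussBinom q m i * (qPoch u q i * P q u v (m - i)) := by
  induction m with
  | zero => simp [P]
  | succ m ih =>
    rw [sum_gaussBinom_succ_mul, qPoch_succ, ih, sum_mul]
    refine sum_congr rfl fun i hi => ?_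
    rw [mem_range_succ_iff] at hi
    have hpow : q ^ i * q ^ (m - i) = q ^ m := by rw [← pow_add, Nat.add_sub_cancel' hi]
    rw [Nat.succ_sub_succ, Nat.succ_sub hi, qPoch_succ, P_succ]
    linear_combination gaussBinom q m i * qPoch u q i * P q u v (m - i) * v * hpow

lemma Nat.add_choose_two (a b : ℕ) : (a + b).choose 2 = a.choose 2 + a * b + b.choose 2 := by
  rw [Nat.add_choose_eq]
  simp only [Nat.sum_antidiagonal_succ, Nat.antidiagonal_zero, sum_singleton, zero_add,
    Nat.choose_zero_right, Nat.choose_one_right, one_mul, mul_one]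
  ring

lemma sum_gaussBinom_mul_neg_pow_mul_pow {q : ℂ} {l n : ℕ} (hl : qPoch q q l ≠ 0) (hln : l ≤ n)
    (b : ℂ) :
    ∑ k ∈ range (l + 1), gaussBinom q l k * ((-b) ^ (l - k) * q ^ (k * (n - l) + (n - k).choose 2))
      = q ^ (n.choose 2 - l.choose 2) * qPoch b q l := by
  obtain ⟨m, rfl⟩ := Nat.exists_eq_add_of_le hln
  rw [qPoch_eq_sum_gaussBinom, mul_sum, ← sum_range_reflect]
  refine sum_congr rfl fun k hk => ?_
  rw [mem_range_succ_iff] at hk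
  have hexp : (l - k) * (l + m - l) + (l + m - (l - k)).choose 2
      = (l + m).choose 2 - l.choose 2 + k.choose 2 := by
    obtain ⟨j, rfl⟩ := Nat.exists_eq_add_of_le hk
    rw [show k + j + m - (k + j - k) = k + m by omega, Nat.add_sub_cancel_left,
      Nat.add_sub_cancel_left, Nat.add_choose_two, Nat.add_choose_two (k + j) m, add_mul]
    omega
  rw [Nat.add_sub_cancel, gaussBinom_sub_right hl hk, Nat.sub_sub_self hk, hexp, pow_add]
  ring

lemma gaussBinom_mul_qPoch_mul_qPoch_eq_sum {q : ℂ} {n k : ℕ} (hn : qPoch q q n ≠ 0) (hk : k ≤ n)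
    (a x y : ℂ) :
    gaussBinom q n k * (qPoch (a * x) q k * qPoch (a * y * q ^ k) q (n - k))
      = ∑ i ∈ range (n + 1 - k), gaussBinom q n (k + i) * gaussBinom q (k + i) k
          * qPoch (a * x) q (k + i) * ((a * q ^ k) ^ (n - (k + i)) * P q x y (n - (k + i))) := by
  rw [qPoch_eq_sum_gaussBinom_mul_qPoch_mul_P q (a * x * q ^ k) (a * y * q ^ k), mul_sum, mul_sum,
    Nat.sub_add_comm hk]
  refine sum_congr rfl fun i hi => ?_
  have hki : k + i ≤ n := by have := mem_range.mp hi; omega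
  rw [← gaussBinom_mul_gaussBinom hn hki, qPoch_add, Nat.sub_sub,
    show a * x * q ^ k = a * q ^ k * x by ring, show a * y * q ^ k = a * q ^ k * y by ring,
    P_mul_mul]
  ring

theorem carlitz_gaussBinom {q : ℂ} {n : ℕ} (hn : qPoch q q n ≠ 0) (a b x y : ℂ)
    (hay : ∀ j < n, a * y * q ^ j ≠ 1) :
    ∑ k ∈ range (n + 1),
        gaussBinom q n k * qPoch (a * x) q k * qPoch b q k * P q x y (n - k)
          * (-(a * b)) ^ (n - k) * q ^ (n.choose 2 - k.choose 2)
      = qPoch (a * y) q n *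
          ∑ k ∈ range (n + 1),
            gaussBinom q n k * (qPoch (a * x) q (n - k) / qPoch (a * y) q (n - k))
              * (-b) ^ k * q ^ (k.choose 2) := by
  calc _ = ∑ l ∈ range (n + 1), ∑ k ∈ range (l + 1),
          gaussBinom q n l * qPoch (a * x) q l * a ^ (n - l) * P q x y (n - l) * (-b) ^ (n - l)
            * (gaussBinom q l k * ((-b) ^ (l - k) * q ^ (k * (n - l) + (n - k).choose 2))) := by
        refine sum_congr rfl fun l hl => ?_
        rw [mem_range_succ_iff] at hl
        rw [← mul_sum, sum_gaussBinom_mul_neg_pow_mul_pow (qPoch_ne_zero_of_le hl hn) hl,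
          neg_mul_eq_mul_neg, mul_pow]
        ring
    _ = ∑ k ∈ range (n + 1), ∑ i ∈ range (n + 1 - k),
          gaussBinom q n (k + i) * qPoch (a * x) q (k + i) * a ^ (n - (k + i))
            * P q x y (n - (k + i)) * (-b) ^ (n - (k + i))
            * (gaussBinom q (k + i) k * ((-b) ^ (k + i - k)
              * q ^ (k * (n - (k + i)) + (n - k).choose 2))) := by
        rw [← sum_range_diag_flip]
        refine sum_congr rfl fun l _ => sum_congr rfl fun k hk => ?_
        rw [Nat.add_sub_cancel' (mem_range_succ_iff.mp hk)]
    _ = ∑ k ∈ range (n + 1), gaussBinom q n k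
          * (qPoch (a * x) q k * qPoch (a * y * q ^ k) q (n - k)) * (-b) ^ (n - k)
            * q ^ (n - k).choose 2 := by
        refine sum_congr rfl fun k hk => ?_
        rw [mem_range_succ_iff] at hk
        rw [gaussBinom_mul_qPoch_mul_qPoch_eq_sum hn hk, sum_mul, sum_mul]
        refine sum_congr rfl fun i hi => ?_
        have hki : k + i ≤ n := by have := mem_range.mp hi; omega
        have hb : (-b) ^ (n - k) = (-b) ^ (n - (k + i)) * (-b) ^ (k + i - k) := by
          rw [← pow_add]; congr 1; omega
        rw [hb, mul_pow, ← pow_mul, pow_add]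
        ring
    _ = _ := by
        rw [mul_sum, ← sum_range_reflect]
        refine sum_congr rfl fun k hk => ?_
        rw [mem_range_succ_iff] at hk
        rw [Nat.add_sub_cancel, gaussBinom_sub_right hn hk, Nat.sub_sub_self hk]
        have hsplit := qPoch_add (a * y) q (n - k) k
        rw [Nat.sub_add_cancel hk] at hsplit
        rw [hsplit]
        field_simp [qPoch_ne_zero_of_le (Nat.sub_le n k) (qPoch_ne_zero hay)]

theorem carlitz_P_identity_general (n : ℕ) (a b x y q : ℂ)
    (hay : ∀ j < n, a * y * q ^ j ≠ 1) :
    ∑ k ∈ range (n + 1),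
        qBinom q n k * qPoch (a * x) q k * qPoch b q k * P q x y (n - k)
          * (-(a * b)) ^ (n - k) * q ^ (n.choose 2 - k.choose 2)
      = qPoch (a * y) q n *
          ∑ k ∈ range (n + 1),
            qBinom q n k * (qPoch (a * x) q (n - k) / qPoch (a * y) q (n - k))
              * (-b) ^ k * q ^ (k.choose 2) := by
  by_cases hn : qPoch q q n = 0
  · simp [qBinom_eq_zero hn]
  have hB : ∀ k ∈ range (n + 1), qBinom q n k = gaussBinom q n k := fun k hk =>
    qBinom_eq_gaussBinom hn (mem_range_succ_iff.mp hk)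
  simp +contextual only [hB]
  exact carlitz_gaussBinom hn a b x y hay

theorem carlitz_P_identity (n : ℕ) (a b x y q : ℂ) (hq : ‖q‖ < 1)
    (hay : ∀ j < n, a * y * q ^ j ≠ 1) :
    ∑ k ∈ range (n + 1),
        qBinom q n k * qPoch (a * x) q k * qPoch b q k * P q x y (n - k)
          * (-(a * b)) ^ (n - k) * q ^ (n.choose 2 - k.choose 2)
      = qPoch (a * y) q n *
          ∑ k ∈ range (n + 1),
            qBinom q n k * (qPoch (a * x) q (n - k) / qPoch (a * y) q (n - k))
              * (-b) ^ k * q ^ (k.choose 2) :=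
  carlitz_P_identity_general n a b x y q hay
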